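/- arXiv:2407.00857 — 7 statements merged into one kernel-verified Lean document; each statement's English description precedes it below -/
import Mathlib

section
/- Let M be a bounded operator on H₁ ⊕ H₂, written M(x ⊕ y) = M₁(x ⊕ y) ⊕ M₂(x ⊕ y) where M₁ : H₁ ⊕ H₂ → H₁ and M₂ : H₁ ⊕ H₂ → H₂ are bounded linear operators. If {xₙ ⊕ yₙ}ₙ≥1 is an M-frame for H₁ ⊕ H₂ with frame bounds A and B, then: (i) A‖M₁*(x)‖² ≤ ∑ₙ₌₁^∞ |⟨x, xₙ⟩|² ≤ B‖x‖² for all x ∈ H₁; (ii) A‖M₂*(y)‖² ≤ ∑ₙ₌₁^∞ |⟨y, yₙ⟩|² ≤ B‖y‖² for all y ∈ H₂. -/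
noncomputable section

open scoped ENNReal

/-- The sequence of direct sums `xₙ ⊕ yₙ` in the super Hilbert space `H₁ ⊕ H₂`,
realized as `WithLp 2 (H₁ × H₂)`. -/
def pairSeq {H₁ H₂ : Type*} [NormedAddCommGroup H₁] [NormedAddCommGroup H₂]
    (x : ℕ → H₁) (y : ℕ → H₂) : ℕ → WithLp 2 (H₁ × H₂) :=
  fun n => (WithLp.equiv 2 (H₁ × H₂)).symm (x n, y n)

/-- A sequence `{xₙ}` is a Bessel sequence: there is `B > 0` with
`∑ₙ |⟨v, xₙ⟩|² ≤ B‖v‖²` for all `v` (in particular the series converges). -/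
def IsBessel {H : Type*} [NormedAddCommGroup H] [InnerProductSpace ℂ H] (x : ℕ → H) : Prop :=
  ∃ B : ℝ, 0 < B ∧ ∀ v : H, Summable (fun n => ‖(inner ℂ v (x n) : ℂ)‖ ^ 2) ∧
    ∑' n, ‖(inner ℂ v (x n) : ℂ)‖ ^ 2 ≤ B * ‖v‖ ^ 2

/-- A sequence `{xₙ}` is a `K`-frame: there are `A, B > 0` with
`A‖K*v‖² ≤ ∑ₙ |⟨v, xₙ⟩|² ≤ B‖v‖²` for all `v`. -/
def IsKFrame {H : Type*} [NormedAddCommGroup H] [InnerProductSpace ℂ H] [CompleteSpace H]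
    (K : H →L[ℂ] H) (x : ℕ → H) : Prop :=
  ∃ A B : ℝ, 0 < A ∧ 0 < B ∧ ∀ v : H, Summable (fun n => ‖(inner ℂ v (x n) : ℂ)‖ ^ 2) ∧
    A * ‖K.adjoint v‖ ^ 2 ≤ ∑' n, ‖(inner ℂ v (x n) : ℂ)‖ ^ 2 ∧
    ∑' n, ‖(inner ℂ v (x n) : ℂ)‖ ^ 2 ≤ B * ‖v‖ ^ 2

/-- The operator `K ⊕ L` on the super Hilbert space `H₁ ⊕ H₂`,
`(K ⊕ L)(x ⊕ y) = Kx ⊕ Ly`. -/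
def dsum {H₁ H₂ : Type*}
    [NormedAddCommGroup H₁] [InnerProductSpace ℂ H₁]
    [NormedAddCommGroup H₂] [InnerProductSpace ℂ H₂]
    (K : H₁ →L[ℂ] H₁) (L : H₂ →L[ℂ] H₂) :
    WithLp 2 (H₁ × H₂) →L[ℂ] WithLp 2 (H₁ × H₂) :=
  ((WithLp.prodContinuousLinearEquiv 2 ℂ H₁ H₂).symm : (H₁ × H₂) →L[ℂ] WithLp 2 (H₁ × H₂)) ∘L
    (K.prodMap L) ∘L
    ((WithLp.prodContinuousLinearEquiv 2 ℂ H₁ H₂) : WithLp 2 (H₁ × H₂) →L[ℂ] (H₁ × H₂))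

variable {H₁ H₂ : Type*}
  [NormedAddCommGroup H₁] [InnerProductSpace ℂ H₁] [CompleteSpace H₁]
  [TopologicalSpace.SeparableSpace H₁]
  [NormedAddCommGroup H₂] [InnerProductSpace ℂ H₂] [CompleteSpace H₂]
  [TopologicalSpace.SeparableSpace H₂]

/-!
Test the `M`-frame inequalities on `u ⊕ 0`: there `⟨u ⊕ 0, xₙ ⊕ yₙ⟩ = ⟨u, xₙ⟩`,
`‖u ⊕ 0‖ = ‖u‖`, and `M*(u ⊕ 0) = M₁* u` because `M₁` is the first component of `M`.
Symmetrically, `0 ⊕ v` gives the statement for `H₂`.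
-/

section Adjoint

variable {𝕜 G E F : Type*} [RCLike 𝕜]
  [NormedAddCommGroup G] [InnerProductSpace 𝕜 G] [CompleteSpace G]
  [NormedAddCommGroup E] [InnerProductSpace 𝕜 E] [CompleteSpace E]
  [NormedAddCommGroup F] [InnerProductSpace 𝕜 F] [CompleteSpace F]

theorem adjoint_toLp_fst_zero (M : G →L[𝕜] WithLp 2 (E × F)) (M₁ : G →L[𝕜] E)
    (hM₁ : ∀ z, (M z).fst = M₁ z) (u : E) :
    M.adjoint (WithLp.toLp 2 (u, 0)) = M₁.adjoint u := by
  refine ext_inner_right 𝕜 fun z => ?_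
  simp [ContinuousLinearMap.adjoint_inner_left, hM₁]

theorem adjoint_toLp_zero_snd (M : G →L[𝕜] WithLp 2 (E × F)) (M₂ : G →L[𝕜] F)
    (hM₂ : ∀ z, (M z).snd = M₂ z) (v : F) :
    M.adjoint (WithLp.toLp 2 (0, v)) = M₂.adjoint v := by
  refine ext_inner_right 𝕜 fun z => ?_
  simp [ContinuousLinearMap.adjoint_inner_left, hM₂]

end Adjoint

theorem necessary_condition_M_frame_general
    (M : WithLp 2 (H₁ × H₂) →L[ℂ] WithLp 2 (H₁ × H₂))
    (M₁ : WithLp 2 (H₁ × H₂) →L[ℂ] H₁) (M₂ : WithLp 2 (H₁ × H₂) →L[ℂ] H₂)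
    (hM : ∀ z : WithLp 2 (H₁ × H₂), M z = (WithLp.equiv 2 (H₁ × H₂)).symm (M₁ z, M₂ z))
    (x : ℕ → H₁) (y : ℕ → H₂) (A B : ℝ)
    (hframe : ∀ z : WithLp 2 (H₁ × H₂),
      Summable (fun n => ‖(inner ℂ z (pairSeq x y n) : ℂ)‖ ^ 2) ∧
      A * ‖M.adjoint z‖ ^ 2 ≤ ∑' n, ‖(inner ℂ z (pairSeq x y n) : ℂ)‖ ^ 2 ∧
      ∑' n, ‖(inner ℂ z (pairSeq x y n) : ℂ)‖ ^ 2 ≤ B * ‖z‖ ^ 2) :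
    (∀ u : H₁, Summable (fun n => ‖(inner ℂ u (x n) : ℂ)‖ ^ 2) ∧
      A * ‖M₁.adjoint u‖ ^ 2 ≤ ∑' n, ‖(inner ℂ u (x n) : ℂ)‖ ^ 2 ∧
      ∑' n, ‖(inner ℂ u (x n) : ℂ)‖ ^ 2 ≤ B * ‖u‖ ^ 2) ∧
    (∀ v : H₂, Summable (fun n => ‖(inner ℂ v (y n) : ℂ)‖ ^ 2) ∧
      A * ‖M₂.adjoint v‖ ^ 2 ≤ ∑' n, ‖(inner ℂ v (y n) : ℂ)‖ ^ 2 ∧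
      ∑' n, ‖(inner ℂ v (y n) : ℂ)‖ ^ 2 ≤ B * ‖v‖ ^ 2) := by
  have hM₁ : ∀ z, (M z).fst = M₁ z := fun z => by simp [hM]
  have hM₂ : ∀ z, (M z).snd = M₂ z := fun z => by simp [hM]
  refine ⟨fun u => ?_, fun v => ?_⟩
  · simpa [pairSeq, adjoint_toLp_fst_zero M M₁ hM₁] using hframe (WithLp.toLp 2 (u, 0))
  · simpa [pairSeq, adjoint_toLp_zero_snd M M₂ hM₂] using hframe (WithLp.toLp 2 (0, v))

/-- if `{xₙ ⊕ yₙ}` is an `M`-frame for `H₁ ⊕ H₂` with frame bounds `A, B`, where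
`M(x ⊕ y) = M₁(x ⊕ y) ⊕ M₂(x ⊕ y)`, then
(i) `A‖M₁*(u)‖² ≤ ∑ₙ |⟨u, xₙ⟩|² ≤ B‖u‖²` for all `u ∈ H₁`, and
(ii) `A‖M₂*(v)‖² ≤ ∑ₙ |⟨v, yₙ⟩|² ≤ B‖v‖²` for all `v ∈ H₂`. -/
theorem necessary_condition_M_frame
    (M : WithLp 2 (H₁ × H₂) →L[ℂ] WithLp 2 (H₁ × H₂))
    (M₁ : WithLp 2 (H₁ × H₂) →L[ℂ] H₁) (M₂ : WithLp 2 (H₁ × H₂) →L[ℂ] H₂)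
    (hM : ∀ z : WithLp 2 (H₁ × H₂), M z = (WithLp.equiv 2 (H₁ × H₂)).symm (M₁ z, M₂ z))
    (x : ℕ → H₁) (y : ℕ → H₂) (A B : ℝ) (hA : 0 < A) (hB : 0 < B)
    (hframe : ∀ z : WithLp 2 (H₁ × H₂),
      Summable (fun n => ‖(inner ℂ z (pairSeq x y n) : ℂ)‖ ^ 2) ∧
      A * ‖M.adjoint z‖ ^ 2 ≤ ∑' n, ‖(inner ℂ z (pairSeq x y n) : ℂ)‖ ^ 2 ∧
      ∑' n, ‖(inner ℂ z (pairSeq x y n) : ℂ)‖ ^ 2 ≤ B * ‖z‖ ^ 2) :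
    (∀ u : H₁, Summable (fun n => ‖(inner ℂ u (x n) : ℂ)‖ ^ 2) ∧
      A * ‖M₁.adjoint u‖ ^ 2 ≤ ∑' n, ‖(inner ℂ u (x n) : ℂ)‖ ^ 2 ∧
      ∑' n, ‖(inner ℂ u (x n) : ℂ)‖ ^ 2 ≤ B * ‖u‖ ^ 2) ∧
    (∀ v : H₂, Summable (fun n => ‖(inner ℂ v (y n) : ℂ)‖ ^ 2) ∧
      A * ‖M₂.adjoint v‖ ^ 2 ≤ ∑' n, ‖(inner ℂ v (y n) : ℂ)‖ ^ 2 ∧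
      ∑' n, ‖(inner ℂ v (y n) : ℂ)‖ ^ 2 ≤ B * ‖v‖ ^ 2) :=
  necessary_condition_M_frame_general M M₁ M₂ hM x y A B hframe
end
end

section
/- Let K be a bounded operator on H₁ and L a bounded operator on H₂. If a sequence {xₙ ⊕ yₙ}ₙ≥1 in H₁ ⊕ H₂ is a K ⊕ L-frame for H₁ ⊕ H₂, then {xₙ}ₙ≥1 is a K-frame for H₁ and {yₙ}ₙ≥1 is an L-frame for H₂. -/
noncomputable section

open scoped ENNReal

variable {H₁ H₂ : Type*}
  [NormedAddCommGroup H₁] [InnerProductSpace ℂ H₁] [CompleteSpace H₁]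
  [TopologicalSpace.SeparableSpace H₁]
  [NormedAddCommGroup H₂] [InnerProductSpace ℂ H₂] [CompleteSpace H₂]
  [TopologicalSpace.SeparableSpace H₂]

/-! Testing the frame inequalities of `{xₙ ⊕ yₙ}` against `v ⊕ 0` and `0 ⊕ w` gives those of
`{xₙ}` and `{yₙ}`: these vectors have norms `‖v‖`, `‖w‖`, coefficients `⟨v, xₙ⟩`, `⟨w, yₙ⟩`, and
since `(K ⊕ L)* = K* ⊕ L*` they are mapped to `K*v ⊕ 0` and `0 ⊕ L*w`. -/

section

variable {E F : Type*} [NormedAddCommGroup E] [NormedAddCommGroup F]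

@[simp]
theorem pairSeq_fst (x : ℕ → E) (y : ℕ → F) (n : ℕ) : (pairSeq x y n).fst = x n :=
  rfl

@[simp]
theorem pairSeq_snd (x : ℕ → E) (y : ℕ → F) (n : ℕ) : (pairSeq x y n).snd = y n :=
  rfl

variable [InnerProductSpace ℂ E] [InnerProductSpace ℂ F]

@[simp]
theorem dsum_toLp (K : E →L[ℂ] E) (L : F →L[ℂ] F) (a : E) (b : F) :
    dsum K L (WithLp.toLp 2 (a, b)) = WithLp.toLp 2 (K a, L b) :=
  rfl

variable [CompleteSpace E] [CompleteSpace F]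

theorem dsum_adjoint (K : E →L[ℂ] E) (L : F →L[ℂ] F) :
    (dsum K L).adjoint = dsum K.adjoint L.adjoint := by
  refine ((ContinuousLinearMap.eq_adjoint_iff _ _).2 fun u w => ?_).symm
  simp only [WithLp.prod_inner_apply]
  exact congr_arg₂ (· + ·) (K.adjoint_inner_left w.fst u.fst) (L.adjoint_inner_left w.snd u.snd)

theorem IsKFrame.of_embedding {K : E →L[ℂ] E} {M : F →L[ℂ] F} {x : ℕ → E} {z : ℕ → F}
    (J : E → F) (h_inner : ∀ v n, inner ℂ (J v) (z n) = inner ℂ v (x n))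
    (h_norm : ∀ v, ‖J v‖ = ‖v‖) (h_adjoint : ∀ v, ‖M.adjoint (J v)‖ = ‖K.adjoint v‖)
    (h : IsKFrame M z) : IsKFrame K x := by
  obtain ⟨A, B, hA, hB, hz⟩ := h
  refine ⟨A, B, hA, hB, fun v => ?_⟩
  simpa only [h_inner, h_norm, h_adjoint] using hz (J v)

end

/-- if `{xₙ ⊕ yₙ}` is a `K ⊕ L`-frame for `H₁ ⊕ H₂`, then `{xₙ}` is a `K`-frame
for `H₁` and `{yₙ}` is an `L`-frame for `H₂`. -/
theorem kframe_of_pair_kframe (K : H₁ →L[ℂ] H₁) (L : H₂ →L[ℂ] H₂)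
    (x : ℕ → H₁) (y : ℕ → H₂)
    (h : IsKFrame (dsum K L) (pairSeq x y)) :
    IsKFrame K x ∧ IsKFrame L y :=
  ⟨h.of_embedding (fun v => WithLp.toLp 2 (v, 0)) (by simp) (by simp) (by simp [dsum_adjoint]),
    h.of_embedding (fun v => WithLp.toLp 2 (0, v)) (by simp) (by simp) (by simp [dsum_adjoint])⟩
end
end

section
/- Let K be a bounded operator on H₁ and L a bounded operator on H₂. Then there exist a K-frame {xₙ}ₙ≥1 for H₁ and an L-frame {yₙ}ₙ≥1 for H₂ such that {xₙ ⊕ yₙ}ₙ≥1 is a K ⊕ L-frame for H₁ ⊕ H₂. -/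
noncomputable section

open scoped ENNReal

/-!
A Parseval frame is a `K`-frame for every bounded `K`, with lower bound `(‖K*‖² + 1)⁻¹`.
Take Parseval frames `{uₙ}` of `H₁` and `{wₙ}` of `H₂` (Hilbert bases, countable by
separability, padded with zeros) and interleave them: `x` carries `u` on the even indices and
`y` carries `w` on the odd ones. Since `xₙ = 0` or `yₙ = 0` for each `n`,
`|⟨a ⊕ b, xₙ ⊕ yₙ⟩|² = |⟨a, xₙ⟩|² + |⟨b, yₙ⟩|²`, so `{xₙ ⊕ yₙ}` is again Parseval.
-/

lemma Function.extend_zero_eq_zero_or {α β γ₁ γ₂ : Type*} [Zero γ₁] [Zero γ₂] {e₁ e₂ : α → β}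
    (h : Disjoint (Set.range e₁) (Set.range e₂)) (f₁ : α → γ₁) (f₂ : α → γ₂) (b : β) :
    Function.extend e₁ f₁ 0 b = 0 ∨ Function.extend e₂ f₂ 0 b = 0 := by
  by_cases hb : b ∈ Set.range e₁
  · exact .inr (Function.extend_apply' _ _ _ fun hb₂ => Set.disjoint_left.1 h hb hb₂)
  · exact .inl (Function.extend_apply' _ _ _ fun hb₁ => hb hb₁)

section Orthonormal

variable {𝕜 E ι : Type*} [RCLike 𝕜] [NormedAddCommGroup E] [InnerProductSpace 𝕜 E]

lemma Orthonormal.one_le_dist {v : ι → E} (hv : Orthonormal 𝕜 v) {i j : ι} (hij : i ≠ j) :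
    1 ≤ dist (v i) (v j) := by
  have hsq : dist (v i) (v j) ^ 2 = 2 := by
    rw [dist_eq_norm, @norm_sub_sq 𝕜, hv.inner_eq_zero hij, hv.norm_eq_one, hv.norm_eq_one]
    norm_num
  nlinarith [dist_nonneg (x := v i) (y := v j)]

lemma Orthonormal.countable [TopologicalSpace.SeparableSpace E] {v : ι → E}
    (hv : Orthonormal 𝕜 v) : Countable ι := by
  refine Pairwise.countable_of_isOpen_disjoint (s := fun i => Metric.ball (v i) 2⁻¹)
    (fun i j hij => Metric.ball_disjoint_ball ?_) (fun _ => Metric.isOpen_ball)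
    (fun _ => Metric.nonempty_ball.2 (by norm_num))
  linarith [hv.one_le_dist hij]

end Orthonormal

section Parseval

variable {𝕜 E : Type*} [RCLike 𝕜] [NormedAddCommGroup E] [InnerProductSpace 𝕜 E]

variable (𝕜) in
def IsParseval {ι : Type*} (x : ι → E) : Prop :=
  ∀ v : E, HasSum (fun i => ‖(inner 𝕜 v (x i) : 𝕜)‖ ^ 2) (‖v‖ ^ 2)

lemma HilbertBasis.isParseval {ι : Type*} (b : HilbertBasis ι 𝕜 E) : IsParseval 𝕜 b := by
  intro v
  rw [← RCLike.hasSum_ofReal (𝕜 := 𝕜)]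
  convert b.hasSum_inner_mul_inner v v using 1
  · ext i
    rw [← inner_conj_symm (b i) v, RCLike.mul_conj]
    norm_cast
  · rw [inner_self_eq_norm_sq_to_K]
    norm_cast

lemma IsParseval.extend_zero {ι : Type*} {x : ι → E} (hx : IsParseval 𝕜 x)
    {κ : Type*} {e : ι → κ} (he : Function.Injective e) :
    IsParseval 𝕜 (Function.extend e x 0) := by
  intro v
  convert (hasSum_extend_zero he).2 (hx v) using 1
  ext n
  rw [Function.apply_extend (fun w => ‖(inner 𝕜 v w : 𝕜)‖ ^ 2)]
  congr 1
  ext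
  simp

variable (𝕜 E) in
lemma exists_isParseval_nat [CompleteSpace E] [TopologicalSpace.SeparableSpace E] :
    ∃ x : ℕ → E, IsParseval 𝕜 x := by
  obtain ⟨w, b, -⟩ := exists_hilbertBasis 𝕜 E
  have : Countable w := b.orthonormal.countable
  obtain ⟨e, he⟩ := Countable.exists_injective_nat w
  exact ⟨_, b.isParseval.extend_zero he⟩

end Parseval

lemma IsParseval.isKFrame {H : Type*} [NormedAddCommGroup H] [InnerProductSpace ℂ H]
    [CompleteSpace H] {x : ℕ → H} (hx : IsParseval ℂ x) (K : H →L[ℂ] H) :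
    IsKFrame K x := by
  refine ⟨(‖K.adjoint‖ ^ 2 + 1)⁻¹, 1, by positivity, one_pos, fun v => ⟨(hx v).summable, ?_, ?_⟩⟩
  · rw [(hx v).tsum_eq, inv_mul_le_iff₀ (by positivity)]
    calc ‖K.adjoint v‖ ^ 2 ≤ (‖K.adjoint‖ * ‖v‖) ^ 2 := by gcongr; exact K.adjoint.le_opNorm v
      _ ≤ (‖K.adjoint‖ ^ 2 + 1) * ‖v‖ ^ 2 := by nlinarith [sq_nonneg ‖v‖]
  · rw [(hx v).tsum_eq, one_mul]

lemma IsParseval.pairSeq {H₁ H₂ : Type*} [NormedAddCommGroup H₁] [InnerProductSpace ℂ H₁]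
    [NormedAddCommGroup H₂] [InnerProductSpace ℂ H₂] {x : ℕ → H₁} {y : ℕ → H₂}
    (hx : IsParseval ℂ x) (hy : IsParseval ℂ y) (hxy : ∀ n, x n = 0 ∨ y n = 0) :
    IsParseval ℂ (pairSeq x y) := by
  intro v
  rw [WithLp.prod_norm_sq_eq_of_L2]
  convert (hx v.fst).add (hy v.snd) using 2 with n
  rw [_root_.pairSeq, WithLp.prod_inner_apply]
  rcases hxy n with h | h <;> simp [h]

variable {H₁ H₂ : Type*}
  [NormedAddCommGroup H₁] [InnerProductSpace ℂ H₁] [CompleteSpace H₁]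
  [TopologicalSpace.SeparableSpace H₁]
  [NormedAddCommGroup H₂] [InnerProductSpace ℂ H₂] [CompleteSpace H₂]
  [TopologicalSpace.SeparableSpace H₂]

/-- for any bounded operators `K` on `H₁` and `L` on `H₂`, there exist a
`K`-frame `{xₙ}` for `H₁` and an `L`-frame `{yₙ}` for `H₂` such that `{xₙ ⊕ yₙ}` is a
`K ⊕ L`-frame for `H₁ ⊕ H₂`. -/
theorem exists_pair_kframe (K : H₁ →L[ℂ] H₁) (L : H₂ →L[ℂ] H₂) :
    ∃ (x : ℕ → H₁) (y : ℕ → H₂),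
      IsKFrame K x ∧ IsKFrame L y ∧ IsKFrame (dsum K L) (pairSeq x y) := by
  obtain ⟨xP, hxP⟩ := exists_isParseval_nat ℂ H₁
  obtain ⟨yP, hyP⟩ := exists_isParseval_nat ℂ H₂
  have heven : Function.Injective (fun k : ℕ => 2 * k) := fun a b h => by simp only at h; omega
  have hodd : Function.Injective (fun k : ℕ => 2 * k + 1) := fun a b h => by simp only at h; omega
  have hdisj : Disjoint (Set.range (fun k : ℕ => 2 * k)) (Set.range (fun k : ℕ => 2 * k + 1)) :=
    Set.disjoint_left.2 (by rintro _ ⟨a, rfl⟩ ⟨b, hb⟩; simp only at hb; omega)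
  have hx := hxP.extend_zero heven
  have hy := hyP.extend_zero hodd
  exact ⟨_, _, hx.isKFrame K, hy.isKFrame L,
    (hx.pairSeq hy (Function.extend_zero_eq_zero_or hdisj xP yP)).isKFrame _⟩
end
end

section
/- Let H be a separable complex Hilbert space, let K and L be bounded operators on H, and let {xₙ}ₙ≥1 be a Bessel sequence in H. Then {xₙ ⊕ xₙ}ₙ≥1 is a K ⊕ L-frame for the super Hilbert space H ⊕ H if and only if K = 0 and L = 0. -/
noncomputable section

open scoped ENNReal

variable {H₁ H₂ : Type*}
  [NormedAddCommGroup H₁] [InnerProductSpace ℂ H₁] [CompleteSpace H₁]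
  [TopologicalSpace.SeparableSpace H₁]
  [NormedAddCommGroup H₂] [InnerProductSpace ℂ H₂] [CompleteSpace H₂]
  [TopologicalSpace.SeparableSpace H₂]

/-! The vectors `u ⊕ (-u)` are orthogonal to every `xₙ ⊕ xₙ`, so the lower `K ⊕ L`-frame bound
forces `(K ⊕ L)* = K* ⊕ L*` to vanish on all of them, i.e. `K* = L* = 0`. Conversely, the lower
bound of a `0`-frame is vacuous, and `{xₙ ⊕ xₙ}` is Bessel because
`|⟨v, xₙ ⊕ xₙ⟩|² ≤ 2 (|⟨v₁, xₙ⟩|² + |⟨v₂, xₙ⟩|²)`. -/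

open ContinuousLinearMap

section DirectSum

variable {E F : Type*} [NormedAddCommGroup E] [InnerProductSpace ℂ E]
  [NormedAddCommGroup F] [InnerProductSpace ℂ F]

@[simp]
lemma dsum_apply (K : E →L[ℂ] E) (L : F →L[ℂ] F) (v : WithLp 2 (E × F)) :
    dsum K L v = WithLp.toLp 2 (K v.fst, L v.snd) := rfl

@[simp]
lemma dsum_zero : dsum (0 : E →L[ℂ] E) (0 : F →L[ℂ] F) = 0 := rfl

lemma inner_pairSeq (x : ℕ → E) (y : ℕ → F) (v : WithLp 2 (E × F)) (n : ℕ) :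
    inner ℂ v (pairSeq x y n) = inner ℂ v.fst (x n) + inner ℂ v.snd (y n) :=
  WithLp.prod_inner_apply _ _

lemma adjoint_dsum [CompleteSpace E] [CompleteSpace F] (K : E →L[ℂ] E) (L : F →L[ℂ] F) :
    (dsum K L).adjoint = dsum K.adjoint L.adjoint := by
  refine ((eq_adjoint_iff _ _).mpr fun v w => ?_).symm
  simp only [dsum_apply, WithLp.prod_inner_apply, adjoint_inner_left]
  rfl

lemma isBessel_pairSeq {x : ℕ → E} {y : ℕ → F} (hx : IsBessel x) (hy : IsBessel y) :
    IsBessel (pairSeq x y) := by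
  obtain ⟨B₁, hB₁, hx⟩ := hx
  obtain ⟨B₂, hB₂, hy⟩ := hy
  refine ⟨2 * (B₁ + B₂), by positivity, fun v => ?_⟩
  obtain ⟨hs₁, hb₁⟩ := hx v.fst
  obtain ⟨hs₂, hb₂⟩ := hy v.snd
  have hle : ∀ n, ‖inner ℂ v (pairSeq x y n)‖ ^ 2 ≤
      2 * (‖inner ℂ v.fst (x n)‖ ^ 2 + ‖inner ℂ v.snd (y n)‖ ^ 2) := fun n => by
    rw [inner_pairSeq]
    exact (pow_le_pow_left₀ (norm_nonneg _) (norm_add_le _ _) 2).trans add_sq_le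
  have hdom := (hs₁.add hs₂).mul_left 2
  have hs := Summable.of_nonneg_of_le (fun n => sq_nonneg _) hle hdom
  refine ⟨hs, ?_⟩
  calc ∑' n, ‖inner ℂ v (pairSeq x y n)‖ ^ 2
      ≤ ∑' n, 2 * (‖inner ℂ v.fst (x n)‖ ^ 2 + ‖inner ℂ v.snd (y n)‖ ^ 2) :=
        hs.tsum_le_tsum hle hdom
    _ = 2 * (∑' n, ‖inner ℂ v.fst (x n)‖ ^ 2 + ∑' n, ‖inner ℂ v.snd (y n)‖ ^ 2) := by
        rw [tsum_mul_left, hs₁.tsum_add hs₂]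
    _ ≤ 2 * (B₁ * ‖v.fst‖ ^ 2 + B₂ * ‖v.snd‖ ^ 2) := by gcongr
    _ ≤ 2 * (B₁ + B₂) * ‖v‖ ^ 2 := by
        rw [WithLp.prod_norm_sq_eq_of_L2]
        nlinarith [sq_nonneg ‖v.fst‖, sq_nonneg ‖v.snd‖]

end DirectSum

section Frames

variable {H : Type*} [NormedAddCommGroup H] [InnerProductSpace ℂ H]

lemma IsKFrame.adjoint_apply_eq_zero [CompleteSpace H] {K : H →L[ℂ] H} {x : ℕ → H}
    (hK : IsKFrame K x) {v : H} (hv : ∀ n, inner ℂ v (x n) = 0) : K.adjoint v = 0 := by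
  obtain ⟨A, B, hA, -, hbound⟩ := hK
  have hlow : A * ‖K.adjoint v‖ ^ 2 ≤ 0 := by simpa [hv] using (hbound v).2.1
  simpa using nonpos_of_mul_nonpos_right hlow hA

lemma isKFrame_zero_iff [CompleteSpace H] {x : ℕ → H} : IsKFrame 0 x ↔ IsBessel x := by
  constructor
  · rintro ⟨A, B, -, hB, hbound⟩
    exact ⟨B, hB, fun v => ⟨(hbound v).1, (hbound v).2.2⟩⟩
  · rintro ⟨B, hB, hbound⟩
    refine ⟨1, B, one_pos, hB, fun v => ⟨(hbound v).1, ?_, (hbound v).2⟩⟩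
    simpa using tsum_nonneg fun n => sq_nonneg ‖inner ℂ v (x n)‖

lemma eq_zero_of_adjoint_dsum_antidiagonal [CompleteSpace H]
    {K L : H →L[ℂ] H}
    (h : ∀ u : H, (dsum K L).adjoint (WithLp.toLp 2 (u, -u)) = 0) : K = 0 ∧ L = 0 := by
  have h' : ∀ u, K.adjoint u = 0 ∧ L.adjoint u = 0 := fun u => by
    simpa [adjoint_dsum] using h u
  constructor
  · rw [← LinearIsometryEquiv.map_eq_zero_iff adjoint]
    ext u
    exact (h' u).1
  · rw [← LinearIsometryEquiv.map_eq_zero_iff adjoint]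
    ext u
    exact (h' u).2

end Frames

theorem diag_pair_kframe_iff_general {H : Type*}
    [NormedAddCommGroup H] [InnerProductSpace ℂ H] [CompleteSpace H]
    (K L : H →L[ℂ] H) (x : ℕ → H) (hx : IsBessel x) :
    IsKFrame (dsum K L) (pairSeq x x) ↔ K = 0 ∧ L = 0 := by
  constructor
  · intro hframe
    have horth : ∀ u n, inner ℂ (WithLp.toLp 2 (u, -u)) (pairSeq x x n) = 0 := fun u n => by
      rw [inner_pairSeq]
      simp
    exact eq_zero_of_adjoint_dsum_antidiagonal fun u => hframe.adjoint_apply_eq_zero (horth u)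
  · rintro ⟨rfl, rfl⟩
    rw [dsum_zero, isKFrame_zero_iff]
    exact isBessel_pairSeq hx hx

/-- for a Bessel sequence `{xₙ}` in `H`, the sequence `{xₙ ⊕ xₙ}` is a
`K ⊕ L`-frame for the super Hilbert space `H ⊕ H` iff `K = 0` and `L = 0`. -/
theorem diag_pair_kframe_iff {H : Type*}
    [NormedAddCommGroup H] [InnerProductSpace ℂ H] [CompleteSpace H]
    [TopologicalSpace.SeparableSpace H]
    (K L : H →L[ℂ] H) (x : ℕ → H) (hx : IsBessel x) :
    IsKFrame (dsum K L) (pairSeq x x) ↔ K = 0 ∧ L = 0 :=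
  diag_pair_kframe_iff_general K L x hx
end
end

section
/- Let K be a bounded operator on H₁ and L a bounded operator on H₂. Let {xₙ}ₙ≥1 be a K-frame for H₁ and {yₙ}ₙ≥1 an L-frame for H₂, with synthesis operators T₁ and T₂ respectively. If {xₙ ⊕ yₙ}ₙ≥1 is a K ⊕ L-frame for H₁ ⊕ H₂, then R(K) ⊆ T₁(N(T₂)) and R(L) ⊆ T₂(N(T₁)), where R denotes range and N denotes kernel. -/
noncomputable section

open scoped ENNReal

/-! The synthesis operator of `xₙ ⊕ yₙ` is `T a = T₁ a ⊕ T₂ a`, and `T* w = (⟨xₙ ⊕ yₙ, w⟩)ₙ`, so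
the lower `K ⊕ L`-frame bound reads `‖(K ⊕ L)* w‖ ≤ C ‖T* w‖`. Douglas' range inclusion (extend
`T* w ↦ ⟨(K ⊕ L) m, w⟩` from `R(T*)` by Hahn–Banach and represent it by Riesz) turns this into
`R(K ⊕ L) ⊆ R(T)`: each `Ku ⊕ 0` is some `T₁ a ⊕ T₂ a`, so `Ku = T₁ a` with `a ∈ N(T₂)`, and
symmetrically for `L`. -/

section

open scoped InnerProductSpace

variable {𝕜 : Type*} [RCLike 𝕜]

theorem LinearMap.exists_strongDual_comp_eq_of_norm_le
    {V W : Type*} [AddCommGroup V] [Module 𝕜 V] [NormedAddCommGroup W] [NormedSpace 𝕜 W]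
    (Θ : V →ₗ[𝕜] W) (φ : V →ₗ[𝕜] 𝕜) (c : ℝ) (h : ∀ v, ‖φ v‖ ≤ c * ‖Θ v‖) :
    ∃ ψ : StrongDual 𝕜 W, ∀ v, ψ (Θ v) = φ v := by
  have hker : LinearMap.ker Θ ≤ LinearMap.ker φ := fun v hv => by
    simpa [LinearMap.mem_ker.1 hv] using h v
  let φ₀ : LinearMap.range Θ →ₗ[𝕜] 𝕜 :=
    (LinearMap.ker Θ).liftQ φ hker ∘ₗ (LinearMap.quotKerEquivRange Θ).symm.toLinearMap
  have hφ₀ : ∀ v, φ₀ ⟨Θ v, Θ.mem_range_self v⟩ = φ v := fun v => by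
    rw [LinearMap.comp_apply, LinearEquiv.coe_toLinearMap,
      LinearMap.quotKerEquivRange_symm_apply_image]
    rfl
  obtain ⟨ψ, hψ, -⟩ := exists_extension_norm_eq _ (φ₀.mkContinuous c <| by
    rintro ⟨_, v, rfl⟩
    simpa [hφ₀] using h v)
  exact ⟨ψ, fun v => (hψ ⟨Θ v, Θ.mem_range_self v⟩).trans (hφ₀ v)⟩

variable {E F G : Type*}
  [NormedAddCommGroup E] [InnerProductSpace 𝕜 E] [CompleteSpace E]
  [NormedAddCommGroup F] [InnerProductSpace 𝕜 F] [CompleteSpace F]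
  [NormedAddCommGroup G] [InnerProductSpace 𝕜 G] [CompleteSpace G]

theorem ContinuousLinearMap.range_subset_range_of_norm_adjoint_le (S : E →L[𝕜] F) (T : G →L[𝕜] F)
    (c : ℝ) (h : ∀ w, ‖S.adjoint w‖ ≤ c * ‖T.adjoint w‖) :
    Set.range S ⊆ Set.range T := by
  rintro _ ⟨m, rfl⟩
  obtain ⟨ψ, hψ⟩ := (T.adjoint : F →ₗ[𝕜] G).exists_strongDual_comp_eq_of_norm_le
    (innerₛₗ 𝕜 (S m)) (‖m‖ * c) fun w => calc
      ‖⟪S m, w⟫_𝕜‖ = ‖⟪m, S.adjoint w⟫_𝕜‖ := by rw [S.adjoint_inner_right]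
      _ ≤ ‖m‖ * ‖S.adjoint w‖ := norm_inner_le_norm _ _
      _ ≤ ‖m‖ * (c * ‖T.adjoint w‖) := by gcongr; exact h w
      _ = ‖m‖ * c * ‖T.adjoint w‖ := by ring
  refine ⟨(InnerProductSpace.toDual 𝕜 G).symm ψ, ext_inner_right 𝕜 fun w => ?_⟩
  rw [← T.adjoint_inner_right, InnerProductSpace.toDual_symm_apply]
  exact hψ w

variable {ι : Type*}

theorem ContinuousLinearMap.adjoint_synthesis_apply (z : ι → E)
    (T : lp (fun _ : ι => 𝕜) 2 →L[𝕜] E)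
    (hT : ∀ a : lp (fun _ : ι => 𝕜) 2, HasSum (fun i => a i • z i) (T a)) (w : E) (i : ι) :
    T.adjoint w i = ⟪z i, w⟫_𝕜 := by
  classical
  have hTi : T (lp.single 2 i 1) = z i := by
    refine (hT _).unique ?_
    convert hasSum_ite_eq i (z i) using 1
    ext j
    by_cases hj : j = i <;> simp [hj]
  rw [← hTi, ← T.adjoint_inner_right, lp.inner_single_left]
  simp [RCLike.inner_apply]

theorem ContinuousLinearMap.norm_adjoint_synthesis_sq (z : ι → E)
    (T : lp (fun _ : ι => 𝕜) 2 →L[𝕜] E)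
    (hT : ∀ a : lp (fun _ : ι => 𝕜) 2, HasSum (fun i => a i • z i) (T a)) (w : E) :
    ‖T.adjoint w‖ ^ 2 = ∑' i, ‖⟪w, z i⟫_𝕜‖ ^ 2 := by
  have := lp.norm_rpow_eq_tsum (p := 2) (by norm_num) (T.adjoint w)
  simp only [ENNReal.toReal_ofNat, Real.rpow_two, T.adjoint_synthesis_apply z hT] at this
  simpa only [norm_inner_symm] using this

theorem IsKFrame.range_subset_range_synthesis {H : Type*} [NormedAddCommGroup H]
    [InnerProductSpace ℂ H] [CompleteSpace H] {K : H →L[ℂ] H} {z : ℕ → H} (hz : IsKFrame K z)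
    (T : lp (fun _ : ℕ => ℂ) 2 →L[ℂ] H)
    (hT : ∀ a : lp (fun _ : ℕ => ℂ) 2, HasSum (fun n => a n • z n) (T a)) :
    Set.range K ⊆ Set.range T := by
  obtain ⟨A, _, hA, -, hframe⟩ := hz
  refine K.range_subset_range_of_norm_adjoint_le T (√A)⁻¹ fun w => ?_
  have hlower : (√A * ‖K.adjoint w‖) ^ 2 ≤ ‖T.adjoint w‖ ^ 2 := by
    rw [mul_pow, Real.sq_sqrt hA.le, T.norm_adjoint_synthesis_sq z hT]
    exact (hframe w).2.1
  rw [← div_eq_inv_mul, le_div_iff₀' (by positivity)]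
  exact (pow_le_pow_iff_left₀ (by positivity) (norm_nonneg _) two_ne_zero).1 hlower

end

section

variable {H₁ H₂ : Type*} [NormedAddCommGroup H₁] [InnerProductSpace ℂ H₁]
  [NormedAddCommGroup H₂] [InnerProductSpace ℂ H₂]

def pairSynthesis (T₁ : lp (fun _ : ℕ => ℂ) 2 →L[ℂ] H₁) (T₂ : lp (fun _ : ℕ => ℂ) 2 →L[ℂ] H₂) :
    lp (fun _ : ℕ => ℂ) 2 →L[ℂ] WithLp 2 (H₁ × H₂) :=
  (WithLp.prodContinuousLinearEquiv 2 ℂ H₁ H₂).symm.toContinuousLinearMap ∘L T₁.prod T₂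

theorem hasSum_pairSeq {x : ℕ → H₁} {y : ℕ → H₂} {T₁ : lp (fun _ : ℕ => ℂ) 2 →L[ℂ] H₁}
    {T₂ : lp (fun _ : ℕ => ℂ) 2 →L[ℂ] H₂}
    (hT₁ : ∀ a : lp (fun _ : ℕ => ℂ) 2, HasSum (fun n => a n • x n) (T₁ a))
    (hT₂ : ∀ a : lp (fun _ : ℕ => ℂ) 2, HasSum (fun n => a n • y n) (T₂ a))
    (a : lp (fun _ : ℕ => ℂ) 2) :
    HasSum (fun n => a n • pairSeq x y n) (pairSynthesis T₁ T₂ a) :=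
  ((hT₁ a).prodMk (hT₂ a)).mapL
    (WithLp.prodContinuousLinearEquiv 2 ℂ H₁ H₂).symm.toContinuousLinearMap

theorem exists_synthesis_eq_of_pair_kframe [CompleteSpace H₁] [CompleteSpace H₂]
    {K : H₁ →L[ℂ] H₁} {L : H₂ →L[ℂ] H₂} {x : ℕ → H₁} {y : ℕ → H₂} {T₁ : lp (fun _ : ℕ => ℂ) 2 →L[ℂ] H₁}
    {T₂ : lp (fun _ : ℕ => ℂ) 2 →L[ℂ] H₂}
    (hT₁ : ∀ a : lp (fun _ : ℕ => ℂ) 2, HasSum (fun n => a n • x n) (T₁ a))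
    (hT₂ : ∀ a : lp (fun _ : ℕ => ℂ) 2, HasSum (fun n => a n • y n) (T₂ a))
    (h : IsKFrame (dsum K L) (pairSeq x y)) (u : H₁) (v : H₂) :
    ∃ a : lp (fun _ : ℕ => ℂ) 2, T₁ a = K u ∧ T₂ a = L v := by
  obtain ⟨a, ha⟩ := h.range_subset_range_synthesis _ (hasSum_pairSeq hT₁ hT₂)
    ⟨WithLp.toLp 2 (u, v), rfl⟩
  exact ⟨a, Prod.ext_iff.1 (congrArg WithLp.ofLp ha)⟩

end

variable {H₁ H₂ : Type*}
  [NormedAddCommGroup H₁] [InnerProductSpace ℂ H₁] [CompleteSpace H₁]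
  [TopologicalSpace.SeparableSpace H₁]
  [NormedAddCommGroup H₂] [InnerProductSpace ℂ H₂] [CompleteSpace H₂]
  [TopologicalSpace.SeparableSpace H₂]

theorem range_subset_of_pair_kframe_general (K : H₁ →L[ℂ] H₁) (L : H₂ →L[ℂ] H₂)
    (x : ℕ → H₁) (y : ℕ → H₂)
    (T₁ : lp (fun _ : ℕ => ℂ) 2 →L[ℂ] H₁)
    (hT₁ : ∀ a : lp (fun _ : ℕ => ℂ) 2, HasSum (fun n => a n • x n) (T₁ a))
    (T₂ : lp (fun _ : ℕ => ℂ) 2 →L[ℂ] H₂)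
    (hT₂ : ∀ a : lp (fun _ : ℕ => ℂ) 2, HasSum (fun n => a n • y n) (T₂ a))
    (h : IsKFrame (dsum K L) (pairSeq x y)) :
    Set.range K ⊆ T₁ '' (LinearMap.ker (T₂ : lp (fun _ : ℕ => ℂ) 2 →ₗ[ℂ] H₂) : Set (lp (fun _ : ℕ => ℂ) 2)) ∧
    Set.range L ⊆ T₂ '' (LinearMap.ker (T₁ : lp (fun _ : ℕ => ℂ) 2 →ₗ[ℂ] H₁) : Set (lp (fun _ : ℕ => ℂ) 2)) := by
  refine ⟨?_, ?_⟩ <;> rintro _ ⟨u, rfl⟩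
  · obtain ⟨a, h₁, h₂⟩ := exists_synthesis_eq_of_pair_kframe hT₁ hT₂ h u 0
    exact ⟨a, by simpa using h₂, h₁⟩
  · obtain ⟨a, h₁, h₂⟩ := exists_synthesis_eq_of_pair_kframe hT₁ hT₂ h 0 u
    exact ⟨a, by simpa using h₁, h₂⟩

/-- if `{xₙ}` is a `K`-frame for `H₁`, `{yₙ}` is an `L`-frame for `H₂` (with
synthesis operators `T₁, T₂`), and `{xₙ ⊕ yₙ}` is a `K ⊕ L`-frame for `H₁ ⊕ H₂`, then
`R(K) ⊆ T₁(N(T₂))` and `R(L) ⊆ T₂(N(T₁))`. -/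
theorem range_subset_of_pair_kframe (K : H₁ →L[ℂ] H₁) (L : H₂ →L[ℂ] H₂)
    (x : ℕ → H₁) (y : ℕ → H₂)
    (hx : IsKFrame K x) (hy : IsKFrame L y)
    (T₁ : lp (fun _ : ℕ => ℂ) 2 →L[ℂ] H₁)
    (hT₁ : ∀ a : lp (fun _ : ℕ => ℂ) 2, HasSum (fun n => a n • x n) (T₁ a))
    (T₂ : lp (fun _ : ℕ => ℂ) 2 →L[ℂ] H₂)
    (hT₂ : ∀ a : lp (fun _ : ℕ => ℂ) 2, HasSum (fun n => a n • y n) (T₂ a))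
    (h : IsKFrame (dsum K L) (pairSeq x y)) :
    Set.range K ⊆ T₁ '' (LinearMap.ker (T₂ : lp (fun _ : ℕ => ℂ) 2 →ₗ[ℂ] H₂) : Set (lp (fun _ : ℕ => ℂ) 2)) ∧
    Set.range L ⊆ T₂ '' (LinearMap.ker (T₁ : lp (fun _ : ℕ => ℂ) 2 →ₗ[ℂ] H₁) : Set (lp (fun _ : ℕ => ℂ) 2)) :=
  range_subset_of_pair_kframe_general K L x y T₁ hT₁ T₂ hT₂ h
end
end

section
/- Let K be a bounded operator on H₁ and L a bounded operator on H₂, and let {xₙ ⊕ yₙ}ₙ≥1 be a K ⊕ L-frame for H₁ ⊕ H₂. Then: (i) if {xₙ}ₙ≥1 is a K-minimal frame for H₁, then L = 0; (ii) if {yₙ}ₙ≥1 is an L-minimal frame for H₂, then K = 0; (iii) if both are minimal, then K = 0 and L = 0. -/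
/-!
Evaluating the lower frame bound of `{xₙ ⊕ yₙ}` at `u ⊕ v` gives
`A (‖K* u‖² + ‖L* v‖²) ≤ ‖T₁* u + T₂* v‖²`, since `T₁*, T₂*` are the analysis operators
`u ↦ (⟪xₙ, u⟫)ₙ`, `v ↦ (⟪yₙ, v⟫)ₙ`. If `T₁` is injective then `T₁*` has dense range, so `T₁* u`
can be taken arbitrarily close to `-T₂* v`; this forces `L* v = 0` for every `v`, i.e. `L = 0`.
The case of `T₂` injective is symmetric.
-/

noncomputable section

open scoped ENNReal

theorem lp.norm_sq_eq_tsum {ι : Type*} {E : ι → Type*} [∀ i, NormedAddCommGroup (E i)]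
    (f : lp E 2) : ‖f‖ ^ 2 = ∑' i, ‖f i‖ ^ 2 := by
  simpa using (lp.hasSum_norm (p := 2) (by norm_num) f).tsum_eq.symm

theorem eq_zero_of_forall_mul_norm_sq_le {E F G : Type*} [NormedAddCommGroup F]
    [NormedAddCommGroup G] {P : E → G} (hP : DenseRange P) {c : ℝ} (hc : 0 < c) {a : F} (w : G)
    (h : ∀ u, c * ‖a‖ ^ 2 ≤ ‖P u + w‖ ^ 2) : a = 0 := by
  have hclosure : ∀ z, c * ‖a‖ ^ 2 ≤ ‖z + w‖ ^ 2 := fun z =>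
    hP.induction_on z (isClosed_le continuous_const (by fun_prop)) h
  have hnonpos : c * ‖a‖ ^ 2 ≤ 0 := by simpa using hclosure (-w)
  have : ‖a‖ ^ 2 ≤ 0 := by nlinarith
  simpa using this

section

variable {𝕜 : Type*} [RCLike 𝕜]

theorem ContinuousLinearMap.denseRange_adjoint_of_injective
    {E F : Type*} [NormedAddCommGroup E] [InnerProductSpace 𝕜 E] [CompleteSpace E]
    [NormedAddCommGroup F] [InnerProductSpace 𝕜 F] [CompleteSpace F]
    {T : E →L[𝕜] F} (hT : Function.Injective T) : DenseRange (ContinuousLinearMap.adjoint T) := by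
  have hker : (ContinuousLinearMap.adjoint T).rangeᗮ = ⊥ := by
    rw [ContinuousLinearMap.orthogonal_range, ContinuousLinearMap.adjoint_adjoint]
    exact LinearMap.ker_eq_bot.mpr hT
  simpa [DenseRange, LinearMap.coe_range] using Submodule.dense_iff_topologicalClosure_eq_top.mpr
    (Submodule.topologicalClosure_eq_top_iff.mpr hker)

theorem adjoint_synthesis_apply {H : Type*} [NormedAddCommGroup H] [InnerProductSpace 𝕜 H]
    [CompleteSpace H] {x : ℕ → H} {T : lp (fun _ : ℕ => 𝕜) 2 →L[𝕜] H}
    (hT : ∀ a : lp (fun _ : ℕ => 𝕜) 2, HasSum (fun n => a n • x n) (T a)) (u : H) (n : ℕ) :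
    ContinuousLinearMap.adjoint T u n = inner 𝕜 (x n) u := by
  have hsingle : T (lp.single 2 n 1) = x n := by
    refine (hT _).unique ?_
    convert hasSum_ite_eq n (x n) using 2 with m
    by_cases hm : m = n <;> simp [hm]
  calc ContinuousLinearMap.adjoint T u n
      = inner 𝕜 (lp.single 2 n (1 : 𝕜)) (ContinuousLinearMap.adjoint T u) := by
        simp [lp.inner_single_left]
    _ = inner 𝕜 (x n) u := by rw [ContinuousLinearMap.adjoint_inner_right, hsingle]

theorem ContinuousLinearMap.eq_zero_of_lower_bound_of_injective {E F F' G : Type*}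
    [NormedAddCommGroup E] [InnerProductSpace 𝕜 E] [CompleteSpace E]
    [NormedAddCommGroup F] [InnerProductSpace 𝕜 F] [CompleteSpace F]
    [NormedAddCommGroup F'] [InnerProductSpace 𝕜 F'] [CompleteSpace F']
    [NormedAddCommGroup G] [InnerProductSpace 𝕜 G] [CompleteSpace G]
    {T : G →L[𝕜] E} (hT : Function.Injective T) (S : F' → G) {L : F →L[𝕜] F'} {A : ℝ}
    (hA : 0 < A) (h : ∀ u v, A * ‖L.adjoint v‖ ^ 2 ≤ ‖T.adjoint u + S v‖ ^ 2) : L = 0 := by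
  have hadj : L.adjoint = 0 := ContinuousLinearMap.ext fun v =>
    eq_zero_of_forall_mul_norm_sq_le (denseRange_adjoint_of_injective hT) hA (S v) (h · v)
  simpa using hadj

end

section

variable {H₁ H₂ : Type*}
  [NormedAddCommGroup H₁] [InnerProductSpace ℂ H₁] [NormedAddCommGroup H₂] [InnerProductSpace ℂ H₂]

theorem inner_toLp_pairSeq (x : ℕ → H₁) (y : ℕ → H₂) (u : H₁) (v : H₂) (n : ℕ) :
    inner ℂ (WithLp.toLp 2 (u, v)) (pairSeq x y n) = inner ℂ u (x n) + inner ℂ v (y n) :=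
  WithLp.prod_inner_apply _ _

variable [CompleteSpace H₁] [CompleteSpace H₂]

theorem adjoint_dsum_s11 (K : H₁ →L[ℂ] H₁) (L : H₂ →L[ℂ] H₂) :
    ContinuousLinearMap.adjoint (dsum K L) = dsum K.adjoint L.adjoint := by
  refine ((ContinuousLinearMap.eq_adjoint_iff _ _).mpr fun a b => ?_).symm
  simp only [WithLp.prod_inner_apply]
  exact congrArg₂ (· + ·) (K.adjoint_inner_left b.fst a.fst) (L.adjoint_inner_left b.snd a.snd)

theorem norm_adjoint_dsum_toLp_sq (K : H₁ →L[ℂ] H₁) (L : H₂ →L[ℂ] H₂) (u : H₁) (v : H₂) :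
    ‖ContinuousLinearMap.adjoint (dsum K L) (WithLp.toLp 2 (u, v))‖ ^ 2
      = ‖K.adjoint u‖ ^ 2 + ‖L.adjoint v‖ ^ 2 := by
  rw [adjoint_dsum_s11, WithLp.prod_norm_sq_eq_of_L2]
  rfl

theorem tsum_norm_inner_pairSeq_sq {x : ℕ → H₁} {y : ℕ → H₂}
    {T₁ : lp (fun _ : ℕ => ℂ) 2 →L[ℂ] H₁} {T₂ : lp (fun _ : ℕ => ℂ) 2 →L[ℂ] H₂}
    (hT₁ : ∀ a : lp (fun _ : ℕ => ℂ) 2, HasSum (fun n => a n • x n) (T₁ a))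
    (hT₂ : ∀ a : lp (fun _ : ℕ => ℂ) 2, HasSum (fun n => a n • y n) (T₂ a)) (u : H₁) (v : H₂) :
    ∑' n, ‖(inner ℂ (WithLp.toLp 2 (u, v)) (pairSeq x y n) : ℂ)‖ ^ 2
      = ‖T₁.adjoint u + T₂.adjoint v‖ ^ 2 := by
  rw [lp.norm_sq_eq_tsum]
  refine tsum_congr fun n => ?_
  rw [inner_toLp_pairSeq, lp.coeFn_add, Pi.add_apply, adjoint_synthesis_apply hT₁,
    adjoint_synthesis_apply hT₂, ← inner_conj_symm u, ← inner_conj_symm v, ← map_add,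
    RCLike.norm_conj]

theorem IsKFrame.exists_lower_bound_adjoint_synthesis {K : H₁ →L[ℂ] H₁} {L : H₂ →L[ℂ] H₂}
    {x : ℕ → H₁} {y : ℕ → H₂} (h : IsKFrame (dsum K L) (pairSeq x y))
    {T₁ : lp (fun _ : ℕ => ℂ) 2 →L[ℂ] H₁} {T₂ : lp (fun _ : ℕ => ℂ) 2 →L[ℂ] H₂}
    (hT₁ : ∀ a : lp (fun _ : ℕ => ℂ) 2, HasSum (fun n => a n • x n) (T₁ a))
    (hT₂ : ∀ a : lp (fun _ : ℕ => ℂ) 2, HasSum (fun n => a n • y n) (T₂ a)) :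
    ∃ A > 0, ∀ u v, A * (‖K.adjoint u‖ ^ 2 + ‖L.adjoint v‖ ^ 2)
      ≤ ‖T₁.adjoint u + T₂.adjoint v‖ ^ 2 := by
  obtain ⟨A, _, hA, _, hframe⟩ := h
  refine ⟨A, hA, fun u v => ?_⟩
  rw [← norm_adjoint_dsum_toLp_sq, ← tsum_norm_inner_pairSeq_sq hT₁ hT₂]
  exact (hframe _).2.1

end

variable {H₁ H₂ : Type*}
  [NormedAddCommGroup H₁] [InnerProductSpace ℂ H₁] [CompleteSpace H₁]
  [TopologicalSpace.SeparableSpace H₁]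
  [NormedAddCommGroup H₂] [InnerProductSpace ℂ H₂] [CompleteSpace H₂]
  [TopologicalSpace.SeparableSpace H₂]

/-- let `{xₙ ⊕ yₙ}` be a `K ⊕ L`-frame for `H₁ ⊕ H₂`, with `T₁, T₂` the synthesis
operators of `{xₙ}, {yₙ}`. Then (i) if `{xₙ}` is a `K`-minimal frame then `L = 0`; (ii) if
`{yₙ}` is an `L`-minimal frame then `K = 0`; (iii) if both are minimal then `K = 0 ∧ L = 0`. -/
theorem zero_of_minimal_pair_kframe (K : H₁ →L[ℂ] H₁) (L : H₂ →L[ℂ] H₂)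
    (x : ℕ → H₁) (y : ℕ → H₂)
    (h : IsKFrame (dsum K L) (pairSeq x y))
    (T₁ : lp (fun _ : ℕ => ℂ) 2 →L[ℂ] H₁)
    (hT₁ : ∀ a : lp (fun _ : ℕ => ℂ) 2, HasSum (fun n => a n • x n) (T₁ a))
    (T₂ : lp (fun _ : ℕ => ℂ) 2 →L[ℂ] H₂)
    (hT₂ : ∀ a : lp (fun _ : ℕ => ℂ) 2, HasSum (fun n => a n • y n) (T₂ a)) :
    ((IsKFrame K x ∧ Function.Injective T₁) → L = 0) ∧
    ((IsKFrame L y ∧ Function.Injective T₂) → K = 0) ∧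
    (((IsKFrame K x ∧ Function.Injective T₁) ∧ (IsKFrame L y ∧ Function.Injective T₂)) →
      K = 0 ∧ L = 0) := by
  obtain ⟨A, hA, hbound⟩ := h.exists_lower_bound_adjoint_synthesis hT₁ hT₂
  have hL : Function.Injective T₁ → L = 0 := fun hinj =>
    ContinuousLinearMap.eq_zero_of_lower_bound_of_injective hinj T₂.adjoint hA fun u v =>
      (mul_le_mul_of_nonneg_left (le_add_of_nonneg_left (sq_nonneg _)) hA.le).trans (hbound u v)
  have hK : Function.Injective T₂ → K = 0 := fun hinj =>
    ContinuousLinearMap.eq_zero_of_lower_bound_of_injective hinj T₁.adjoint hA fun v u => by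
      rw [add_comm]
      exact (mul_le_mul_of_nonneg_left (le_add_of_nonneg_right (sq_nonneg _)) hA.le).trans
        (hbound u v)
  exact ⟨fun hx => hL hx.2, fun hy => hK hy.2, fun hxy => ⟨hK hxy.2.2, hL hxy.1.2⟩⟩
end
end

section
/- Let K be a bounded operator on H₁ and L a bounded operator on H₂, and let {xₙ ⊕ yₙ}ₙ≥1 be a K ⊕ L-frame for H₁ ⊕ H₂. If {aₙ ⊕ bₙ}ₙ≥1 is a K ⊕ L-dual frame to {xₙ ⊕ yₙ}ₙ≥1, then {aₙ}ₙ≥1 is a K-dual frame to {xₙ}ₙ≥1 and {bₙ}ₙ≥1 is an L-dual frame to {yₙ}ₙ≥1. -/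
/-!
Coordinate projection `P₁ : H₁ ⊕ H₂ → H₁` has adjoint `v ↦ v ⊕ 0`, so `P₁ (K ⊕ L) P₁* = K`.
Applying `P₁` to the reconstruction formula `(K ⊕ L) w = ∑ ⟨aₙ ⊕ bₙ, w⟩ (xₙ ⊕ yₙ)` at
`w = P₁* v` gives `K v = ∑ ⟨aₙ, v⟩ xₙ`, and `{aₙ} = {P₁ (aₙ ⊕ bₙ)}` is Bessel because
`⟨v, P₁ w⟩ = ⟨P₁* v, w⟩`. The second coordinate is symmetric.
-/

noncomputable section

open scoped ENNReal

variable {H₁ H₂ : Type*}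
  [NormedAddCommGroup H₁] [InnerProductSpace ℂ H₁] [CompleteSpace H₁]
  [TopologicalSpace.SeparableSpace H₁]
  [NormedAddCommGroup H₂] [InnerProductSpace ℂ H₂] [CompleteSpace H₂]
  [TopologicalSpace.SeparableSpace H₂]

/-- A Bessel sequence `{fₙ}` is a `K`-dual frame to `{xₙ}` if `Kv = ∑ₙ ⟨v, fₙ⟩ xₙ` for all `v`
(with the inner product linear in `v`). -/
def IsKDual {H : Type*} [NormedAddCommGroup H] [InnerProductSpace ℂ H] [CompleteSpace H]
    (K : H →L[ℂ] H) (f x : ℕ → H) : Prop :=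
  IsBessel f ∧ ∀ v : H, HasSum (fun n => (inner ℂ (f n) v : ℂ) • x n) (K v)

open ContinuousLinearMap

section

variable {H H' : Type*} [NormedAddCommGroup H] [InnerProductSpace ℂ H] [CompleteSpace H]
  [NormedAddCommGroup H'] [InnerProductSpace ℂ H'] [CompleteSpace H']

theorem IsBessel.map {f : ℕ → H'} (hf : IsBessel f) (P : H' →L[ℂ] H) :
    IsBessel fun n => P (f n) := by
  obtain ⟨B, hB, hbound⟩ := hf
  refine ⟨B * ‖P‖ ^ 2 + B, by positivity, fun v => ?_⟩
  simp only [← adjoint_inner_left]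
  refine ⟨(hbound (P.adjoint v)).1, ?_⟩
  have hPv : ‖P.adjoint v‖ ≤ ‖P‖ * ‖v‖ := by
    simpa only [adjoint.norm_map] using P.adjoint.le_opNorm v
  calc ∑' n, ‖inner ℂ (P.adjoint v) (f n)‖ ^ 2 ≤ B * ‖P.adjoint v‖ ^ 2 := (hbound _).2
    _ ≤ B * (‖P‖ * ‖v‖) ^ 2 := by gcongr
    _ ≤ (B * ‖P‖ ^ 2 + B) * ‖v‖ ^ 2 := by nlinarith [sq_nonneg ‖v‖]

theorem IsKDual.compress {K : H' →L[ℂ] H'} {f x : ℕ → H'} (h : IsKDual K f x)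
    (P : H' →L[ℂ] H) :
    IsKDual (P ∘L K ∘L P.adjoint) (fun n => P (f n)) (fun n => P (x n)) := by
  refine ⟨h.1.map P, fun v => ?_⟩
  simpa only [map_smul, adjoint_inner_right, comp_apply] using (h.2 (P.adjoint v)).mapL P

end

section

variable {E F : Type*} [NormedAddCommGroup E] [InnerProductSpace ℂ E]
  [NormedAddCommGroup F] [InnerProductSpace ℂ F] [CompleteSpace E] [CompleteSpace F]

theorem WithLp.adjoint_fstL_apply (v : E) :
    (WithLp.fstL 2 ℂ E F).adjoint v = WithLp.toLp 2 (v, 0) :=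
  ext_inner_right ℂ fun w => by simp [adjoint_inner_left, WithLp.prod_inner_apply]

theorem WithLp.adjoint_sndL_apply (v : F) :
    (WithLp.sndL 2 ℂ E F).adjoint v = WithLp.toLp 2 (0, v) :=
  ext_inner_right ℂ fun w => by simp [adjoint_inner_left, WithLp.prod_inner_apply]

theorem fstL_comp_dsum_comp_adjoint (K : E →L[ℂ] E) (L : F →L[ℂ] F) :
    WithLp.fstL 2 ℂ E F ∘L dsum K L ∘L (WithLp.fstL 2 ℂ E F).adjoint = K := by
  ext v
  simp [WithLp.adjoint_fstL_apply, dsum]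

theorem sndL_comp_dsum_comp_adjoint (K : E →L[ℂ] E) (L : F →L[ℂ] F) :
    WithLp.sndL 2 ℂ E F ∘L dsum K L ∘L (WithLp.sndL 2 ℂ E F).adjoint = L := by
  ext v
  simp [WithLp.adjoint_sndL_apply, dsum]

end

theorem dual_of_pair_dual_general (K : H₁ →L[ℂ] H₁) (L : H₂ →L[ℂ] H₂)
    (x a : ℕ → H₁) (y b : ℕ → H₂)
    (hdual : IsKDual (dsum K L) (pairSeq a b) (pairSeq x y)) :
    IsKDual K a x ∧ IsKDual L b y := by
  have hfst := hdual.compress (WithLp.fstL 2 ℂ H₁ H₂)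
  have hsnd := hdual.compress (WithLp.sndL 2 ℂ H₁ H₂)
  rw [fstL_comp_dsum_comp_adjoint] at hfst
  rw [sndL_comp_dsum_comp_adjoint] at hsnd
  exact ⟨hfst, hsnd⟩

/-- if `{xₙ ⊕ yₙ}` is a `K ⊕ L`-frame for `H₁ ⊕ H₂` and `{aₙ ⊕ bₙ}` is a
`K ⊕ L`-dual frame to it, then `{aₙ}` is a `K`-dual frame to `{xₙ}` and `{bₙ}` is an
`L`-dual frame to `{yₙ}`. -/
theorem dual_of_pair_dual (K : H₁ →L[ℂ] H₁) (L : H₂ →L[ℂ] H₂)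
    (x a : ℕ → H₁) (y b : ℕ → H₂)
    (h : IsKFrame (dsum K L) (pairSeq x y))
    (hdual : IsKDual (dsum K L) (pairSeq a b) (pairSeq x y)) :
    IsKDual K a x ∧ IsKDual L b y :=
  dual_of_pair_dual_general K L x a y b hdual
end
end
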